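/- arXiv:2312.05650 — 4 statements merged into one kernel-verified Lean document; each statement's English description precedes it below -/
import Mathlib

section
/- Krieger's Marker Lemma: Let Γ be a countable group acting by homeomorphisms on a totally disconnected compact metric space X, let P ⊂ Γ be a finite symmetric set not containing the identity, and let V ⊆ X be a clopen set such that g·x ≠ x for every g ∈ P and x ∈ V. Then there is a clopen set C ⊆ V with C ∩ g(C) = ∅ for all g ∈ P, and V ⊆ C ∪ ⋃_{g∈P} g(C). -/
/-!
Every point `x ∈ V` has a clopen neighbourhood `U ⊆ V` with `U ∩ g • U = ∅` for `g ∈ P`: for each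
`g` separate `x` from `g • x` by a clopen `W` and take `W \ g⁻¹ • W`, then intersect over `P`.
By compactness finitely many such `U₁, …, Uₙ` cover `V`. The marker set is built greedily,
`Cₖ₊₁ = Cₖ ∪ (Uₖ₊₁ \ ⋃_{g ∈ P} g • Cₖ)`: the new points avoid the `P`-translates of `Cₖ`, and since
`P` is symmetric, `Cₖ` also avoids their `P`-translates. Each `Uₖ` is covered by `Cₖ ∪ ⋃ g • Cₖ`.
-/

open Set Pointwise

section

variable {Γ X : Type*} [Group Γ] [MulAction Γ X]

theorem disjoint_smul_union_sdiff {P : Finset Γ} (hP : ∀ g ∈ P, g⁻¹ ∈ P) {C U : Set X}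
    (hC : ∀ g ∈ P, Disjoint C (g • C)) (hU : ∀ g ∈ P, Disjoint U (g • U)) :
    ∀ g ∈ P, Disjoint (C ∪ U \ ⋃ h ∈ P, h • C) (g • (C ∪ U \ ⋃ h ∈ P, h • C)) := by
  intro g hg
  set D := U \ ⋃ h ∈ P, h • C
  have hD : ∀ h ∈ P, Disjoint D (h • C) := fun h hh =>
    disjoint_sdiff_left.mono_right (subset_iUnion₂ (s := fun h (_ : h ∈ P) => h • C) h hh)
  rw [smul_set_union, disjoint_union_left, disjoint_union_right, disjoint_union_right]
  refine ⟨⟨hC g hg, ?_⟩, hD g hg, (hU g hg).mono sdiff_subset (smul_set_mono sdiff_subset)⟩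
  rw [disjoint_smul_set_right]
  exact (hD _ (hP g hg)).symm

variable [TopologicalSpace X] [ContinuousConstSMul Γ X]

theorem IsClopen.smul {s : Set X} (hs : IsClopen s) (g : Γ) : IsClopen (g • s) :=
  ⟨hs.isClosed.smul g, hs.isOpen.smul g⟩

theorem exists_isClopen_marker_of_cover {ι : Type*} {P : Finset Γ} (hP : ∀ g ∈ P, g⁻¹ ∈ P)
    (t : Finset ι) {U : ι → Set X} (hUc : ∀ i ∈ t, IsClopen (U i))
    (hU : ∀ i ∈ t, ∀ g ∈ P, Disjoint (U i) (g • U i)) :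
    ∃ C ⊆ ⋃ i ∈ t, U i, IsClopen C ∧ (∀ g ∈ P, Disjoint C (g • C)) ∧
      ⋃ i ∈ t, U i ⊆ C ∪ ⋃ g ∈ P, g • C := by
  classical
  induction t using Finset.induction_on with
  | empty => exact ⟨∅, by simp, isClopen_empty, by simp, by simp⟩
  | insert i t _ ih =>
    rw [Finset.forall_mem_insert] at hUc hU
    obtain ⟨C, hCU, hCc, hC, hCcov⟩ := ih hUc.2 hU.2
    set C' := C ∪ U i \ ⋃ g ∈ P, g • C
    have hmono : ⋃ g ∈ P, g • C ⊆ ⋃ g ∈ P, g • C' :=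
      iUnion₂_mono fun g _ => smul_set_mono subset_union_left
    refine ⟨C', ?_, hCc.union (hUc.1.diff (isClopen_biUnion_finset fun g _ => hCc.smul g)),
      disjoint_smul_union_sdiff hP hC hU.1, ?_⟩
    · rw [Finset.set_biUnion_insert]
      exact union_subset (hCU.trans subset_union_right) (sdiff_subset.trans subset_union_left)
    · rw [Finset.set_biUnion_insert]
      refine union_subset ((subset_sdiff_union (U i) (⋃ g ∈ P, g • C)).trans ?_) (hCcov.trans ?_)
      · exact union_subset_union subset_union_right hmono
      · exact union_subset_union subset_union_left hmono

variable [TotallySeparatedSpace X]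

theorem exists_isClopen_mem_disjoint_smul {g : Γ} {x : X} (hx : g • x ≠ x) :
    ∃ U : Set X, IsClopen U ∧ x ∈ U ∧ Disjoint U (g • U) := by
  obtain ⟨W, hW, hxW, hgxW⟩ := exists_isClopen_of_totally_separated hx.symm
  refine ⟨W \ g⁻¹ • W, hW.diff (hW.smul g⁻¹), ⟨hxW, ?_⟩, ?_⟩
  · rwa [mem_smul_set_iff_inv_smul_mem, inv_inv]
  · rw [smul_set_sdiff, smul_inv_smul]
    exact disjoint_sdiff_right.mono_left sdiff_subset

theorem exists_isClopen_mem_disjoint_smul_of_finset (P : Finset Γ) {x : X}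
    (hx : ∀ g ∈ P, g • x ≠ x) :
    ∃ U : Set X, IsClopen U ∧ x ∈ U ∧ ∀ g ∈ P, Disjoint U (g • U) := by
  choose! W hW hxW hWg using fun g hg => exists_isClopen_mem_disjoint_smul (hx g hg)
  refine ⟨⋂ g ∈ P, W g, isClopen_biInter_finset hW, mem_iInter₂.2 hxW, fun g hg => ?_⟩
  have hsub : ⋂ g ∈ P, W g ⊆ W g := biInter_subset_of_mem hg
  exact (hWg g hg).mono hsub (smul_set_mono hsub)

end

theorem stmt7_general {Γ X : Type*} [Group Γ] [MetricSpace X] [CompactSpace X]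
    [TotallyDisconnectedSpace X] [MulAction Γ X]
    (hcont : ∀ g : Γ, Continuous fun x : X => g • x)
    (P : Finset Γ) (hPsym : ∀ g ∈ P, g⁻¹ ∈ P)
    (V : Set X) (hV : IsClopen V) (hfree : ∀ g ∈ P, ∀ x ∈ V, g • x ≠ x) :
    ∃ C : Set X, C ⊆ V ∧ IsClopen C ∧
      (∀ g ∈ P, C ∩ ((g • ·) '' C) = ∅) ∧
      V ⊆ C ∪ ⋃ g ∈ P, (g • ·) '' C := by
  have : ContinuousConstSMul Γ X := ⟨hcont⟩
  have hlocal : ∀ x ∈ V, ∃ U : Set X, IsClopen U ∧ x ∈ U ∧ U ⊆ V ∧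
      ∀ g ∈ P, Disjoint U (g • U) := by
    intro x hx
    obtain ⟨U, hUc, hxU, hU⟩ :=
      exists_isClopen_mem_disjoint_smul_of_finset P fun g hg => hfree g hg x hx
    exact ⟨U ∩ V, hUc.inter hV, ⟨hxU, hx⟩, inter_subset_right,
      fun g hg => (hU g hg).mono inter_subset_left (smul_set_mono inter_subset_left)⟩
  choose! U hUc hxU hUV hU using hlocal
  obtain ⟨t, htV, hVt⟩ := hV.isClosed.isCompact.elim_nhds_subcover U
    fun x hx => (hUc x hx).isOpen.mem_nhds (hxU x hx)
  obtain ⟨C, hCU, hCc, hC, hCcov⟩ := exists_isClopen_marker_of_cover hPsym t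
    (fun x hx => hUc x (htV x hx)) fun x hx => hU x (htV x hx)
  exact ⟨C, hCU.trans (iUnion₂_subset fun x hx => hUV x (htV x hx)), hCc,
    fun g hg => disjoint_iff_inter_eq_empty.1 (hC g hg), hVt.trans hCcov⟩

/-- Krieger's Marker Lemma for actions of countable groups on totally disconnected
compact metric spaces. -/
theorem stmt7 {Γ X : Type*} [Group Γ] [Countable Γ] [MetricSpace X] [CompactSpace X]
    [TotallyDisconnectedSpace X] [MulAction Γ X]
    (hcont : ∀ g : Γ, Continuous fun x : X => g • x)
    (P : Finset Γ) (hP1 : (1 : Γ) ∉ P) (hPsym : ∀ g ∈ P, g⁻¹ ∈ P)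
    (V : Set X) (hV : IsClopen V) (hfree : ∀ g ∈ P, ∀ x ∈ V, g • x ≠ x) :
    ∃ C : Set X, C ⊆ V ∧ IsClopen C ∧
      (∀ g ∈ P, C ∩ ((g • ·) '' C) = ∅) ∧
      V ⊆ C ∪ ⋃ g ∈ P, (g • ·) '' C :=
  stmt7_general hcont P hPsym V hV hfree
end

section
/- If a subshift Y over a countable group Γ has the map extension property, then Y is strongly contractible: there exists a continuous equivariant map ψ : {0,1}^Γ × Y × Y → Y with ψ(0̄, y⁰, y¹) = y⁰, ψ(1̄, y⁰, y¹) = y¹ for all y⁰, y¹ ∈ Y, and ψ(z, y, y) = y for all z ∈ {0,1}^Γ and y ∈ Y. -/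
/-- The (left) shift action of a countable group `Γ` on configurations `Γ → A`. -/
def shift {Γ A : Type*} [Group Γ] (g : Γ) (x : Γ → A) : Γ → A :=
  fun h => x (g⁻¹ * h)

/-- A subshift: a closed shift-invariant subset of the full shift. -/
def IsSubshift {Γ A : Type*} [Group Γ] [TopologicalSpace A] (X : Set (Γ → A)) : Prop :=
  IsClosed X ∧ ∀ g : Γ, ∀ x ∈ X, shift g x ∈ X

/-- A map of subshifts: a continuous, equivariant function carrying `X` into `Y`. -/
def IsSubshiftMap {Γ A B : Type*} [Group Γ] [TopologicalSpace A] [TopologicalSpace B]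
    (X : Set (Γ → A)) (Y : Set (Γ → B)) (f : (Γ → A) → (Γ → B)) : Prop :=
  ContinuousOn f X ∧ (∀ x ∈ X, f x ∈ Y) ∧
    ∀ g : Γ, ∀ x ∈ X, f (shift g x) = shift g (f x)

/-- `X ⇝ Y` : every point of `X` has its stabilizer dominated by the stabilizer of
some point of `Y`. -/
def Squig {Γ A B : Type*} [Group Γ] (X : Set (Γ → A)) (Y : Set (Γ → B)) : Prop :=
  ∀ x ∈ X, ∃ y ∈ Y, ∀ g : Γ, shift g x = x → shift g y = y

/-- The map extension property for a subshift `Y`. -/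
def MapExtensionProperty {Γ A : Type*} [Group Γ] [TopologicalSpace A]
    (Y : Set (Γ → A)) : Prop :=
  ∀ (B : Type) (_ : Fintype B) (tB : TopologicalSpace B) (_ : @DiscreteTopology B tB)
    (X Xt : Set (Γ → B)), IsSubshift X → IsSubshift Xt → Xt ⊆ X → Squig X Y →
    ∀ f : (Γ → B) → (Γ → A), IsSubshiftMap Xt Y f →
      ∃ F : (Γ → B) → (Γ → A), IsSubshiftMap X Y F ∧ ∀ x ∈ Xt, F x = f x

/-- A subshift with the map extension property is strongly contractible. -/
theorem stmt8 {Γ A : Type} [Group Γ] [Countable Γ]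
    [Fintype A] [TopologicalSpace A] [DiscreteTopology A]
    (Y : Set (Γ → A)) (hY : IsSubshift Y) (hmep : MapExtensionProperty Y) :
    ∃ ψ : (Γ → Bool) × (Γ → A) × (Γ → A) → (Γ → A),
      ContinuousOn ψ (Set.univ ×ˢ Y ×ˢ Y) ∧
      (∀ z : Γ → Bool, ∀ y₀ ∈ Y, ∀ y₁ ∈ Y, ψ (z, y₀, y₁) ∈ Y) ∧
      (∀ g : Γ, ∀ z : Γ → Bool, ∀ y₀ ∈ Y, ∀ y₁ ∈ Y,
        ψ (shift g z, shift g y₀, shift g y₁) = shift g (ψ (z, y₀, y₁))) ∧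
      (∀ y₀ ∈ Y, ∀ y₁ ∈ Y, ψ (fun _ => false, y₀, y₁) = y₀) ∧
      (∀ y₀ ∈ Y, ∀ y₁ ∈ Y, ψ (fun _ => true, y₀, y₁) = y₁) ∧
      (∀ z : Γ → Bool, ∀ y ∈ Y, ψ (z, y, y) = y) := by
  classical
  -- The auxiliary alphabet
  set B : Type := Bool × A × A with hB
  -- projections
  let p2 : (Γ → B) → (Γ → A) := fun x h => (x h).2.1
  let p3 : (Γ → B) → (Γ → A) := fun x h => (x h).2.2
  have hp2 : Continuous p2 :=
    continuous_pi fun h => continuous_fst.comp (continuous_snd.comp (continuous_apply h))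
  have hp3 : Continuous p3 :=
    continuous_pi fun h => continuous_snd.comp (continuous_snd.comp (continuous_apply h))
  -- the big subshift
  let X : Set (Γ → B) := {x | p2 x ∈ Y ∧ p3 x ∈ Y}
  -- the sub-subshift where the extension is prescribed
  let Xt : Set (Γ → B) :=
    X ∩ (({x | ∀ h, (x h).1 = false} ∪ {x | ∀ h, (x h).1 = true}) ∪ {x | p2 x = p3 x})
  -- the prescribed map : a 1-block code
  let f : (Γ → B) → (Γ → A) := fun x h => cond (x h).1 ((x h).2.2) ((x h).2.1)
  have hXsub : IsSubshift X := by
    constructor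
    · have : X = p2 ⁻¹' Y ∩ p3 ⁻¹' Y := rfl
      rw [this]
      exact (hY.1.preimage hp2).inter (hY.1.preimage hp3)
    · intro g x hx
      refine ⟨?_, ?_⟩
      · exact hY.2 g (p2 x) hx.1
      · exact hY.2 g (p3 x) hx.2
  have hXtsub : IsSubshift Xt := by
    constructor
    · refine hXsub.1.inter (IsClosed.union (IsClosed.union ?_ ?_) ?_)
      · have : {x : Γ → B | ∀ h, (x h).1 = false} = ⋂ h, {x : Γ → B | (x h).1 = false} := by
          ext x; simp [Set.mem_iInter]
        rw [this]
        exact isClosed_iInter fun h =>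
          isClosed_eq (continuous_fst.comp (continuous_apply h)) continuous_const
      · have : {x : Γ → B | ∀ h, (x h).1 = true} = ⋂ h, {x : Γ → B | (x h).1 = true} := by
          ext x; simp [Set.mem_iInter]
        rw [this]
        exact isClosed_iInter fun h =>
          isClosed_eq (continuous_fst.comp (continuous_apply h)) continuous_const
      · exact isClosed_eq hp2 hp3
    · intro g x hx
      refine ⟨hXsub.2 g x hx.1, ?_⟩
      rcases hx.2 with (h | h) | h
      · exact Or.inl (Or.inl fun h' => h _)
      · exact Or.inl (Or.inr fun h' => h _)
      · refine Or.inr ?_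
        funext h'
        exact congrFun h _
  have hsquig : Squig X Y := by
    intro x hx
    refine ⟨p2 x, hx.1, fun g hg => ?_⟩
    have : p2 (shift g x) = p2 x := congrArg p2 hg
    exact this
  have hfmap : IsSubshiftMap Xt Y f := by
    refine ⟨?_, ?_, ?_⟩
    · refine Continuous.continuousOn ?_
      refine continuous_pi fun h => ?_
      exact (continuous_of_discreteTopology
        (f := fun b : B => cond b.1 b.2.2 b.2.1)).comp (continuous_apply h)
    · intro x hx
      rcases hx.2 with (h | h) | h
      · have : f x = p2 x := by
          funext h'
          show cond (x h').1 _ _ = _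
          rw [h h']
          rfl
        rw [this]; exact hx.1.1
      · have : f x = p3 x := by
          funext h'
          show cond (x h').1 _ _ = _
          rw [h h']
          rfl
        rw [this]; exact hx.1.2
      · have : f x = p2 x := by
          funext h'
          show cond (x h').1 ((x h').2.2) ((x h').2.1) = (x h').2.1
          have h23 : (x h').2.2 = (x h').2.1 := (congrFun h h').symm
          rw [h23]
          cases (x h').1 <;> rfl
        rw [this]; exact hx.1.1
    · intro g x _
      rfl
  obtain ⟨F, hF, hFext⟩ := hmep B inferInstance inferInstance inferInstance X Xt hXsub hXtsub
    Set.inter_subset_left hsquig f hfmap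
  -- encoding of triples
  let e : (Γ → Bool) × (Γ → A) × (Γ → A) → (Γ → B) :=
    fun t h => (t.1 h, t.2.1 h, t.2.2 h)
  have he : Continuous e := by
    refine continuous_pi fun h => ?_
    exact ((continuous_apply h).comp continuous_fst).prodMk
      (((continuous_apply h).comp (continuous_fst.comp continuous_snd)).prodMk
        ((continuous_apply h).comp (continuous_snd.comp continuous_snd)))
  have hemem : ∀ (z : Γ → Bool), ∀ y₀ ∈ Y, ∀ y₁ ∈ Y, e (z, y₀, y₁) ∈ X := by
    intro z y₀ h₀ y₁ h₁
    exact ⟨h₀, h₁⟩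
  refine ⟨fun t => F (e t), ?_, ?_, ?_, ?_, ?_, ?_⟩
  · refine ContinuousOn.comp hF.1 he.continuousOn ?_
    intro t ht
    rcases ht with ⟨-, h₀, h₁⟩
    exact hemem t.1 t.2.1 h₀ t.2.2 h₁
  · intro z y₀ h₀ y₁ h₁
    exact hF.2.1 _ (hemem z y₀ h₀ y₁ h₁)
  · intro g z y₀ h₀ y₁ h₁
    exact hF.2.2 g (e (z, y₀, y₁)) (hemem z y₀ h₀ y₁ h₁)
  · intro y₀ h₀ y₁ h₁
    have hm : e (fun _ => false, y₀, y₁) ∈ Xt :=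
      ⟨hemem _ y₀ h₀ y₁ h₁, Or.inl (Or.inl fun _ => rfl)⟩
    show F (e (fun _ => false, y₀, y₁)) = y₀
    rw [hFext _ hm]
    rfl
  · intro y₀ h₀ y₁ h₁
    have hm : e (fun _ => true, y₀, y₁) ∈ Xt :=
      ⟨hemem _ y₀ h₀ y₁ h₁, Or.inl (Or.inr fun _ => rfl)⟩
    show F (e (fun _ => true, y₀, y₁)) = y₁
    rw [hFext _ hm]
    rfl
  · intro z y hy
    have hm : e (z, y, y) ∈ Xt :=
      ⟨hemem z y hy y hy, Or.inr rfl⟩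
    show F (e (z, y, y)) = y
    rw [hFext _ hm]
    funext h
    show cond (z h) (y h) (y h) = y h
    cases z h <;> rfl
end

section
/- For every compact convex set F̃ ⊆ ℝ^d containing the Euclidean ball of radius r around 0, and every 0 < r₀ < r, the r₀-neighborhood of the boundary of F̃ is contained in the closure of (1 + r₀/r)F̃ \ (1 − r₀/r)F̃; consequently the Lebesgue measure of ∂F̃ + B_{r₀} is at most ((1 + r₀/r)^d − (1 − r₀/r)^d) times the Lebesgue measure of F̃. -/
open Pointwise MeasureTheory

/-- For a compact convex set `F̃ ⊆ ℝ^d` containing the ball of radius `r` about `0`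
and `0 < r₀ < r`, the `r₀`-neighborhood of the boundary of `F̃` lies in the closure of
`(1 + r₀/r)F̃ \ (1 − r₀/r)F̃`; consequently its Lebesgue measure is at most
`((1 + r₀/r)^d − (1 − r₀/r)^d)` times the measure of `F̃`. -/
theorem stmt16 {d : ℕ} (F : Set (EuclideanSpace ℝ (Fin d)))
    (hconv : Convex ℝ F) (hcomp : IsCompact F)
    (r r₀ : ℝ) (hr₀ : 0 < r₀) (hrr : r₀ < r)
    (hball : Metric.closedBall (0 : EuclideanSpace ℝ (Fin d)) r ⊆ F) :
    frontier F + Metric.closedBall (0 : EuclideanSpace ℝ (Fin d)) r₀ ⊆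
        closure ((((1 + r₀ / r) • F) : Set (EuclideanSpace ℝ (Fin d))) \
          ((1 - r₀ / r) • F)) ∧
      volume (frontier F + Metric.closedBall (0 : EuclideanSpace ℝ (Fin d)) r₀) ≤
        ENNReal.ofReal ((1 + r₀ / r) ^ d - (1 - r₀ / r) ^ d) * volume F := by
  have hr : (0:ℝ) < r := hr₀.trans hrr
  set t := r₀ / r with htdef
  have ht0 : 0 < t := div_pos hr₀ hr
  have ht1 : t < 1 := (div_lt_one hr).2 hrr
  have htr : t * r = r₀ := div_mul_cancel₀ r₀ hr.ne'
  have hFclosed := hcomp.isClosed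
  -- scaled balls inside scaled copies of F
  have key : ∀ s : ℝ, 0 < s → Metric.closedBall (0 : EuclideanSpace ℝ (Fin d)) (s * r) ⊆ s • F := by
    intro s hs v hv
    refine ⟨s⁻¹ • v, hball ?_, smul_inv_smul₀ hs.ne' v⟩
    rw [Metric.mem_closedBall, dist_zero_right] at hv ⊢
    rw [norm_smul, norm_inv, Real.norm_of_nonneg hs.le]
    rw [inv_mul_le_iff₀ hs]
    linarith
  have hball₀ : Metric.closedBall (0 : EuclideanSpace ℝ (Fin d)) r₀ ⊆ t • F := by
    have := key t ht0; rwa [htr] at this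
  set S := (1 + t) • F with hSdef
  set T := (1 - t) • F with hTdef
  have hTS : T ⊆ interior S := by
    intro y hy
    apply mem_interior_iff_mem_nhds.2
    apply Filter.mem_of_superset (Metric.closedBall_mem_nhds y (by positivity : (0:ℝ) < 2*r₀))
    intro w hw
    have hwy : w - y ∈ Metric.closedBall (0 : EuclideanSpace ℝ (Fin d)) ((2*t) * r) := by
      rw [Metric.mem_closedBall, dist_zero_right]
      rw [Metric.mem_closedBall, dist_eq_norm] at hw
      calc ‖w - y‖ ≤ 2 * r₀ := hw
        _ = 2 * t * r := by rw [mul_assoc, htr]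
    have : w = y + (w - y) := by abel
    rw [this, hSdef, show (1 + t) = (1 - t) + 2 * t by ring,
      hconv.add_smul (by linarith) (by linarith)]
    exact Set.add_mem_add hy (key (2*t) (by linarith) hwy)
  have part1 : frontier F + Metric.closedBall (0 : EuclideanSpace ℝ (Fin d)) r₀ ⊆ closure (S \ T) := by
    intro z hz
    rw [Set.mem_add] at hz
    obtain ⟨x, hx, b, hb, rfl⟩ := hz
    have hxF : x ∈ F := hFclosed.frontier_subset hx
    have hzS : x + b ∈ S := by
      rw [hSdef, hconv.add_smul zero_le_one ht0.le, one_smul]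
      exact Set.add_mem_add hxF (hball₀ hb)
    have hzT : x + b ∉ interior T := by
      intro hmem
      obtain ⟨ε, hε, hball'⟩ := Metric.isOpen_iff.1 isOpen_interior (x+b) hmem
      have hsub : Metric.ball x ε ⊆ F := by
        intro w hw
        have hwb : w + b ∈ T := interior_subset (hball' (by
          rw [Metric.mem_ball] at hw ⊢
          simpa [dist_eq_norm, add_sub_add_right_eq_sub] using hw))
        have hbmem : -b ∈ t • F := hball₀ (by simpa using hb)
        have : w = (w + b) + (-b) := by abel
        rw [this, ← one_smul ℝ F, show (1:ℝ) = (1 - t) + t by ring,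
          hconv.add_smul (by linarith) ht0.le]
        exact Set.add_mem_add hwb hbmem
      exact hx.2 (mem_interior.2 ⟨Metric.ball x ε, hsub, Metric.isOpen_ball,
        Metric.mem_ball_self hε⟩)
    by_cases hT : x + b ∈ T
    · have hzint : x + b ∈ interior S := hTS hT
      have hz' : x + b ∈ closure Tᶜ := by rw [closure_compl]; exact hzT
      rw [mem_closure_iff] at hz' ⊢
      intro U hU hzU
      obtain ⟨w, ⟨hwU, hwS⟩, hwT⟩ :=
        hz' (U ∩ interior S) (hU.inter isOpen_interior) ⟨hzU, hzint⟩
      exact ⟨w, hwU, interior_subset hwS, hwT⟩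
    · exact subset_closure ⟨hzS, hT⟩
  refine ⟨part1, ?_⟩
  have hSc : IsCompact S := by
    rw [hSdef, ← Set.image_smul]
    exact hcomp.image (continuous_const_smul _)
  have hsub2 : closure (S \ T) ⊆ S \ interior T := by
    apply closure_minimal
    · exact fun z hz => ⟨hz.1, fun h => hz.2 (interior_subset h)⟩
    · exact hSc.isClosed.inter isOpen_interior.isClosed_compl
  have hfin : volume F ≠ ⊤ := hcomp.measure_lt_top.ne
  have hvS : volume S = ENNReal.ofReal ((1+t)^d) * volume F := by
    rw [hSdef, Measure.addHaar_smul, finrank_euclideanSpace_fin,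
      abs_of_pos (pow_pos (by linarith : (0:ℝ) < 1 + t) d)]
  have hvT : volume T = ENNReal.ofReal ((1-t)^d) * volume F := by
    rw [hTdef, Measure.addHaar_smul, finrank_euclideanSpace_fin,
      abs_of_pos (pow_pos (by linarith : (0:ℝ) < 1 - t) d)]
  have hfrT : volume (frontier T) = 0 := (hconv.smul _).addHaar_frontier volume
  have hvintT : volume (interior T) = volume T := measure_interior_of_null_frontier hfrT
  have hiTS : interior T ⊆ S := interior_subset.trans (hTS.trans interior_subset)
  calc volume (frontier F + Metric.closedBall (0 : EuclideanSpace ℝ (Fin d)) r₀)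
      ≤ volume (closure (S \ T)) := measure_mono part1
    _ ≤ volume (S \ interior T) := measure_mono hsub2
    _ = volume S - volume (interior T) := by
        refine measure_diff hiTS isOpen_interior.measurableSet.nullMeasurableSet ?_
        exact ((measure_mono hiTS).trans_lt hSc.measure_lt_top).ne
    _ = ENNReal.ofReal ((1+t)^d) * volume F - ENNReal.ofReal ((1-t)^d) * volume F := by
        rw [hvS, hvintT, hvT]
    _ ≤ ENNReal.ofReal ((1+t)^d - (1-t)^d) * volume F := by
        rw [ENNReal.ofReal_sub _ (pow_pos (by linarith : (0:ℝ) < 1 - t) d).le,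
          ENNReal.sub_mul (fun _ _ => hfin)]
end

section
/- Let A ⊆ ℝ^d be a convex set with 0 ∈ A and let 0 < r₀ < R. Then the Lebesgue measure of A ∩ (B_{R+r₀} \ B_{R−r₀}) is at most ((R+r₀)^d − (R−r₀)^d)/(R−r₀)^d times the Lebesgue measure of A. -/
open MeasureTheory Pointwise

/-- For a convex set `A ⊆ ℝ^d` with `0 ∈ A` and `0 < r₀ < R`, the Lebesgue measure of
`A ∩ (B_{R+r₀} \ B_{R−r₀})` is at most `((R+r₀)^d − (R−r₀)^d)/(R−r₀)^d` times the
Lebesgue measure of `A`. -/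
theorem stmt17 {d : ℕ} (A : Set (EuclideanSpace ℝ (Fin d)))
    (hconv : Convex ℝ A) (h0 : (0 : EuclideanSpace ℝ (Fin d)) ∈ A)
    (r₀ R : ℝ) (hr₀ : 0 < r₀) (hrR : r₀ < R) :
    volume (A ∩ (Metric.closedBall (0 : EuclideanSpace ℝ (Fin d)) (R + r₀) \
        Metric.closedBall (0 : EuclideanSpace ℝ (Fin d)) (R - r₀))) ≤
      ENNReal.ofReal (((R + r₀) ^ d - (R - r₀) ^ d) / (R - r₀) ^ d) * volume A := by
  have hRr : (0 : ℝ) < R - r₀ := by linarith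
  have hRr' : (0 : ℝ) < R + r₀ := by linarith
  set c : ℝ := (R + r₀) / (R - r₀) with hc
  have hc1 : 1 ≤ c := (one_le_div hRr).2 (by linarith)
  have hc0 : 0 < c := lt_of_lt_of_le one_pos hc1
  set S : Set (EuclideanSpace ℝ (Fin d)) :=
    A ∩ Metric.closedBall 0 (R - r₀) with hS
  set T : Set (EuclideanSpace ℝ (Fin d)) :=
    A ∩ (Metric.closedBall 0 (R + r₀) \ Metric.closedBall 0 (R - r₀)) with hT
  -- A ∩ B_{R+r₀} ⊆ c • S
  have key : A ∩ Metric.closedBall 0 (R + r₀) ⊆ c • S := by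
    rintro x ⟨hxA, hxB⟩
    refine ⟨c⁻¹ • x, ⟨?_, ?_⟩, ?_⟩
    · exact hconv.smul_mem_of_zero_mem h0 hxA
        ⟨inv_nonneg.2 hc0.le, inv_le_one_of_one_le₀ hc1⟩
    · simp only [Metric.mem_closedBall, dist_zero_right] at hxB ⊢
      rw [norm_smul, norm_inv, Real.norm_of_nonneg hc0.le]
      calc c⁻¹ * ‖x‖ ≤ c⁻¹ * (R + r₀) := by
            exact mul_le_mul_of_nonneg_left hxB (inv_nonneg.2 hc0.le)
        _ = R - r₀ := by rw [hc]; field_simp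
    · show c • c⁻¹ • x = x
      rw [smul_smul, mul_inv_cancel₀ hc0.ne', one_smul]
  have hTsub : T ⊆ c • S := fun x hx => key ⟨hx.1, hx.2.1⟩
  have hSsub : S ⊆ c • S := fun x hx =>
    key ⟨hx.1, Metric.closedBall_subset_closedBall (by linarith) hx.2⟩
  have hSnm : NullMeasurableSet S :=
    ((hconv.inter (convex_closedBall _ _)).nullMeasurableSet volume)
  have hdisj : AEDisjoint volume T S := by
    apply Disjoint.aedisjoint
    rw [Set.disjoint_left]
    rintro x ⟨_, _, hx2⟩ ⟨_, hx3⟩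
    exact hx2 hx3
  have hsum : volume T + volume S ≤ volume (c • S) := by
    rw [← measure_union₀ hSnm hdisj]
    exact measure_mono (Set.union_subset hTsub hSsub)
  have hsmul : volume (c • S) = ENNReal.ofReal (c ^ d) * volume S := by
    rw [Measure.addHaar_smul_of_nonneg (volume : Measure (EuclideanSpace ℝ (Fin d))) hc0.le S,
      finrank_euclideanSpace_fin]
  have hSfin : volume S < ⊤ :=
    lt_of_le_of_lt (measure_mono Set.inter_subset_right)
      (MeasureTheory.measure_closedBall_lt_top)
  have hT' : volume T ≤ ENNReal.ofReal (c ^ d - 1) * volume S := by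
    have h1 : (1 : ℝ) ≤ c ^ d := one_le_pow₀ hc1
    have : ENNReal.ofReal (c ^ d) = ENNReal.ofReal (c ^ d - 1) + 1 := by
      rw [← ENNReal.ofReal_one, ← ENNReal.ofReal_add (by linarith) one_pos.le]
      ring_nf
    rw [hsmul, this, add_mul, one_mul] at hsum
    exact (ENNReal.add_le_add_iff_right hSfin.ne).1 hsum
  have hcd : c ^ d - 1 = ((R + r₀) ^ d - (R - r₀) ^ d) / (R - r₀) ^ d := by
    rw [hc, div_pow, sub_div, div_self (pow_ne_zero d hRr.ne')]
  calc volume T ≤ ENNReal.ofReal (c ^ d - 1) * volume S := hT'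
    _ ≤ ENNReal.ofReal (((R + r₀) ^ d - (R - r₀) ^ d) / (R - r₀) ^ d) * volume A := by
        rw [hcd]; exact mul_le_mul_right (measure_mono Set.inter_subset_left) _
end
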